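/- arXiv:2212.08692 — 7 statements merged into one kernel-verified Lean document; each statement's English description precedes it below -/
import Mathlib

section
/- Let M ≥ 2 be an integer and, for each m = 1, …, M−1, let c_m : (0,∞) → [0,∞) be a function. For every ε > 0 and every integer m₀ with 1 ≤ m₀ ≤ M−1 there exists a constant C ≥ 0, depending only on ε, M, m₀ and the functions c_1, …, c_{M−1}, with the following property: whenever a_0, a_1, …, a_M are nonnegative real numbers such that for every ε' > 0 and every m with 1 ≤ m ≤ M−1 one has a_m ≤ ε'·a_{m+1} + c_m(ε')·a_{m−1}, then a_{m₀} ≤ ε·a_M + C·a_0. -/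
/-!
Say `a i` is ε-dominated by `a j` modulo `a k` when for every `ε > 0` there is `C ≥ 0` with
`a i ≤ ε a j + C a k` uniformly in `a`; the hypothesis is that `a m` is ε-dominated by `a (m+1)`
modulo `a (m-1)`. Inducting upwards, this and the domination of `a (m-1)` by `a m` modulo `a 0`
give the domination of `a m` by `a (m+1)` modulo `a 0`: using `ε / 2` in the first bound and a
small enough `ε` in the second, the resulting term in `a m` is at most `a m / 2` and is absorbed
into the left-hand side. Chaining these bounds, with `ε = 1` at every step but the last, gives
the domination of `a m₀` by `a M` modulo `a 0`.
-/

def EpsDominated {ι : Type*} (S : Set (ι → ℝ)) (i j k : ι) : Prop :=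
  ∀ ε > 0, ∃ C ≥ 0, ∀ a ∈ S, a i ≤ ε * a j + C * a k

namespace EpsDominated

variable {ι : Type*} {S : Set (ι → ℝ)} {i j k l : ι}

theorem left_self (hj : ∀ a ∈ S, 0 ≤ a j) : EpsDominated S k j k := fun ε hε =>
  ⟨1, zero_le_one, fun a ha => by nlinarith [hj a ha]⟩

theorem trans (hij : EpsDominated S i j l) (hjk : EpsDominated S j k l) :
    EpsDominated S i k l := by
  intro ε hε
  obtain ⟨C₁, hC₁, h₁⟩ := hij 1 one_pos
  obtain ⟨C₂, hC₂, h₂⟩ := hjk ε hε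
  refine ⟨C₁ + C₂, by positivity, fun a ha => ?_⟩
  linarith [h₁ a ha, h₂ a ha]

theorem absorb (hij : EpsDominated S i j k) (hki : EpsDominated S k i l)
    (hi : ∀ a ∈ S, 0 ≤ a i) : EpsDominated S i j l := by
  intro ε hε
  obtain ⟨K, hK, h₁⟩ := hij (ε / 2) (by positivity)
  set δ : ℝ := 1 / (2 * (K + 1))
  obtain ⟨C, hC, h₂⟩ := hki δ (by positivity)
  have hKδ : K * δ ≤ 1 / 2 := by
    rw [mul_one_div, div_le_div_iff₀ (by positivity) two_pos]
    linarith
  refine ⟨2 * K * C, by positivity, fun a ha => ?_⟩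
  have hk : K * a k ≤ K * δ * a i + K * C * a l := by
    linarith [mul_le_mul_of_nonneg_left (h₂ a ha) hK]
  linarith [h₁ a ha, mul_le_mul_of_nonneg_right hKδ (hi a ha)]

end EpsDominated

section Chain

variable {S : Set (ℕ → ℝ)} {N : ℕ}

theorem epsDominated_succ_zero (hS : ∀ a ∈ S, ∀ m ≤ N, 0 ≤ a m)
    (hloc : ∀ m, 1 ≤ m → m < N → EpsDominated S m (m + 1) (m - 1)) :
    ∀ m, m + 1 ≤ N → EpsDominated S m (m + 1) 0
  | 0, hN => EpsDominated.left_self fun a ha => hS a ha 1 hN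
  | m + 1, hN =>
    (hloc (m + 1) (Nat.le_add_left 1 m) hN).absorb (epsDominated_succ_zero hS hloc m (by omega))
      fun a ha => hS a ha (m + 1) (by omega)

theorem epsDominated_zero_of_lt (hS : ∀ a ∈ S, ∀ m ≤ N, 0 ≤ a m)
    (hloc : ∀ m, 1 ≤ m → m < N → EpsDominated S m (m + 1) (m - 1))
    {m n : ℕ} (hmn : m < n) (hn : n ≤ N) : EpsDominated S m n 0 := by
  induction n, hmn using Nat.le_induction with
  | base => exact epsDominated_succ_zero hS hloc m hn
  | succ n _ ih =>
    exact (ih (by omega)).trans (epsDominated_succ_zero hS hloc n hn)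

end Chain

theorem local_convexity_implies_global_convexity_general
    (M : ℕ) (c : ℕ → ℝ → ℝ)
    (hc : ∀ m : ℕ, 1 ≤ m → m ≤ M - 1 → ∀ ε' : ℝ, 0 < ε' → 0 ≤ c m ε')
    (ε : ℝ) (hε : 0 < ε) (m₀ : ℕ) (hm₀ : 1 ≤ m₀) (hm₀' : m₀ ≤ M - 1) :
    ∃ C : ℝ, 0 ≤ C ∧
      ∀ a : ℕ → ℝ, (∀ m : ℕ, m ≤ M → 0 ≤ a m) →
        (∀ ε' : ℝ, 0 < ε' → ∀ m : ℕ, 1 ≤ m → m ≤ M - 1 →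
          a m ≤ ε' * a (m + 1) + c m ε' * a (m - 1)) →
        a m₀ ≤ ε * a M + C * a 0 := by
  set S : Set (ℕ → ℝ) := {a | (∀ m ≤ M, 0 ≤ a m) ∧ ∀ ε' : ℝ, 0 < ε' → ∀ m : ℕ, 1 ≤ m →
    m ≤ M - 1 → a m ≤ ε' * a (m + 1) + c m ε' * a (m - 1)}
  have hloc : ∀ m, 1 ≤ m → m < M → EpsDominated S m (m + 1) (m - 1) := fun m hm hmM ε' hε' =>
    ⟨c m ε', hc m hm (by omega) ε' hε', fun a ha => ha.2 ε' hε' m hm (by omega)⟩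
  obtain ⟨C, hC, hbound⟩ :=
    epsDominated_zero_of_lt (fun a ha => ha.1) hloc (by omega : m₀ < M) le_rfl ε hε
  exact ⟨C, hC, fun a ha hrec => hbound a ⟨ha, hrec⟩⟩

/-- Local convexity implies global convexity (Lemma 3.1). -/
theorem local_convexity_implies_global_convexity
    (M : ℕ) (hM : 2 ≤ M) (c : ℕ → ℝ → ℝ)
    (hc : ∀ m : ℕ, 1 ≤ m → m ≤ M - 1 → ∀ ε' : ℝ, 0 < ε' → 0 ≤ c m ε')
    (ε : ℝ) (hε : 0 < ε) (m₀ : ℕ) (hm₀ : 1 ≤ m₀) (hm₀' : m₀ ≤ M - 1) :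
    ∃ C : ℝ, 0 ≤ C ∧
      ∀ a : ℕ → ℝ, (∀ m : ℕ, m ≤ M → 0 ≤ a m) →
        (∀ ε' : ℝ, 0 < ε' → ∀ m : ℕ, 1 ≤ m → m ≤ M - 1 →
          a m ≤ ε' * a (m + 1) + c m ε' * a (m - 1)) →
        a m₀ ≤ ε * a M + C * a 0 :=
  local_convexity_implies_global_convexity_general M c hc ε hε m₀ hm₀ hm₀'
end

section
/- Let M ≥ 2 be an integer and let b_0, b_1, …, b_M be nonnegative real numbers. Then there exist real numbers b̂_0, b̂_1, …, b̂_M such that b̂_m > b_m for every m with 0 ≤ m ≤ M, and b̂_m² ≤ b̂_{m−1}·(b̂_{m+1} − b_{m+1}) for every m with 1 ≤ m ≤ M−1. -/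
/-! All terms of `majorizingSeq b` are at least `1`, and each term exceeds `b` at its index by at
least the square of the previous term, so `b̂ₘ² ≤ b̂ₘ₊₁ - bₘ₊₁ ≤ b̂ₘ₋₁ (b̂ₘ₊₁ - bₘ₊₁)`. -/

noncomputable def majorizingSeq (b : ℕ → ℝ) : ℕ → ℝ
  | 0 => max (b 0) 0 + 1
  | n + 1 => majorizingSeq b n ^ 2 + max (b (n + 1)) 0 + 1

section majorizingSeq

variable (b : ℕ → ℝ)

theorem one_le_majorizingSeq (n : ℕ) : 1 ≤ majorizingSeq b n := by
  cases n with
  | zero => simp only [majorizingSeq]; linarith [le_max_right (b 0) 0]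
  | succ n =>
    simp only [majorizingSeq]
    linarith [le_max_right (b (n + 1)) 0, sq_nonneg (majorizingSeq b n)]

theorem lt_majorizingSeq (n : ℕ) : b n < majorizingSeq b n := by
  cases n with
  | zero => simp only [majorizingSeq]; linarith [le_max_left (b 0) 0]
  | succ n =>
    simp only [majorizingSeq]
    nlinarith [le_max_left (b (n + 1)) 0, sq_nonneg (majorizingSeq b n)]

theorem majorizingSeq_sq_le_succ_sub (n : ℕ) :
    majorizingSeq b n ^ 2 ≤ majorizingSeq b (n + 1) - b (n + 1) := by
  simp only [majorizingSeq]
  linarith [le_max_left (b (n + 1)) 0]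

theorem majorizingSeq_sq_le_mul (n : ℕ) :
    majorizingSeq b (n + 1) ^ 2 ≤ majorizingSeq b n * (majorizingSeq b (n + 2) - b (n + 2)) :=
  (majorizingSeq_sq_le_succ_sub b (n + 1)).trans <|
    le_mul_of_one_le_left ((sq_nonneg _).trans (majorizingSeq_sq_le_succ_sub b (n + 1)))
      (one_le_majorizingSeq b n)

end majorizingSeq

theorem exists_majorizing_sequence_general
    (M : ℕ) (b : ℕ → ℝ) :
    ∃ bh : ℕ → ℝ,
      (∀ m : ℕ, m ≤ M → b m < bh m) ∧
      (∀ m : ℕ, 1 ≤ m → m ≤ M - 1 →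
        (bh m) ^ 2 ≤ bh (m - 1) * (bh (m + 1) - b (m + 1))) := by
  refine ⟨majorizingSeq b, fun m _ => lt_majorizingSeq b m, fun m hm _ => ?_⟩
  obtain ⟨k, rfl⟩ : ∃ k, m = k + 1 := ⟨m - 1, by omega⟩
  simpa using majorizingSeq_sq_le_mul b k

/-- Existence of the auxiliary majorizing sequence `b̂` (used in Proposition 3.4). -/
theorem exists_majorizing_sequence
    (M : ℕ) (hM : 2 ≤ M) (b : ℕ → ℝ) (hb : ∀ m : ℕ, m ≤ M → 0 ≤ b m) :
    ∃ bh : ℕ → ℝ,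
      (∀ m : ℕ, m ≤ M → b m < bh m) ∧
      (∀ m : ℕ, 1 ≤ m → m ≤ M - 1 →
        (bh m) ^ 2 ≤ bh (m - 1) * (bh (m + 1) - b (m + 1))) :=
  exists_majorizing_sequence_general M b
end

section
/- For all integers j and ν with 0 ≤ j ≤ ν − 1 one has ∏_{i=j}^{ν−1} ε_i = (τ_j/(1 + τ_{ν−1}))·(2/q)^{ν−j−1}. -/
/-! The closed form of `τ` is the solution of the affine recursion `τ (ν + 1) = (2/q) (1 + τ ν)`
started at `τ₀`. Rewriting each numerator `τ (i + 1)` of the product as `(2/q) (1 + τ i)`, the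
product of the `ε i` telescopes, leaving the first numerator, the last denominator and one factor
`2/q` per cancelled pair. -/

lemma geom_affine_closed_form_succ {K : Type*} [Field K] {r : K} (hr : r ≠ 1) (a : K) (n : ℕ) :
    r ^ (n + 1) * a + (r ^ (n + 1 + 1) - r) / (r - 1) =
      r * (1 + (r ^ n * a + (r ^ (n + 1) - r) / (r - 1))) := by
  have : r - 1 ≠ 0 := sub_ne_zero.mpr hr
  field_simp
  ring

lemma pos_of_affine_recursion {r : ℝ} (hr : 0 < r) {τ : ℕ → ℝ} (h₀ : 0 < τ 0)
    (hrec : ∀ n, τ (n + 1) = r * (1 + τ n)) (n : ℕ) : 0 < τ n := by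
  induction n with
  | zero => exact h₀
  | succ n ih => rw [hrec n]; positivity

lemma prod_div_one_add_of_affine_recursion {K : Type*} [Field K] {r : K} {τ : ℕ → K}
    (hrec : ∀ n, τ (n + 1) = r * (1 + τ n)) (hτ : ∀ n, 1 + τ n ≠ 0) (j k : ℕ) :
    ∏ i ∈ Finset.Ico j (j + k + 1), τ i / (1 + τ i) = τ j / (1 + τ (j + k)) * r ^ k := by
  induction k with
  | zero => simp
  | succ k ih =>
    rw [← add_assoc, Finset.prod_Ico_succ_top (by omega), ih, hrec (j + k)]
    field_simp [hτ (j + k), hτ (j + k + 1)]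
    ring

theorem moser_epsilon_product_general
    (q τ₀ : ℝ) (hq1 : 1 < q) (hq2 : q < 2) (hτ₀ : 0 < τ₀)
    (τ ε : ℕ → ℝ)
    (hτzero : τ 0 = τ₀)
    (hτ : ∀ ν : ℕ, 1 ≤ ν →
      τ ν = (2 / q) ^ ν * τ₀ + ((2 / q) ^ (ν + 1) - 2 / q) / (2 / q - 1))
    (hε : ∀ ν : ℕ, ε ν = τ ν / (1 + τ ν)) :
    ∀ j ν : ℕ, j + 1 ≤ ν →
      (∏ i ∈ Finset.Ico j ν, ε i) = τ j / (1 + τ (ν - 1)) * (2 / q) ^ (ν - j - 1) := by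
  have hr : 1 < 2 / q := (one_lt_div (by linarith)).2 hq2
  have hclosed : ∀ ν, τ ν = (2 / q) ^ ν * τ₀ + ((2 / q) ^ (ν + 1) - 2 / q) / (2 / q - 1) := by
    rintro (_ | ν)
    · simp [hτzero]
    · exact hτ _ ν.succ_pos
  have hrec : ∀ n, τ (n + 1) = 2 / q * (1 + τ n) := fun n => by
    rw [hclosed, hclosed, geom_affine_closed_form_succ hr.ne']
  have hpos := pos_of_affine_recursion (by linarith) (hτzero ▸ hτ₀) hrec
  intro j ν hjν
  obtain ⟨k, rfl⟩ : ∃ k, ν = j + k + 1 := ⟨ν - j - 1, by omega⟩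
  rw [show j + k + 1 - j - 1 = k by omega, Nat.add_sub_cancel]
  simp only [hε]
  exact prod_div_one_add_of_affine_recursion hrec (fun n => by linarith [hpos n]) j k

/-- Product formula for the quotients ε_i = τ_i/(1+τ_i). -/
theorem moser_epsilon_product
    (q τ₀ : ℝ) (hq1 : 1 < q) (hq2 : q < 2) (hτ₀ : 0 < τ₀)
    (τ β ε : ℕ → ℝ)
    (hτzero : τ 0 = τ₀) (hβzero : β 0 = 0)
    (hτ : ∀ ν : ℕ, 1 ≤ ν →
      τ ν = (2 / q) ^ ν * τ₀ + ((2 / q) ^ (ν + 1) - 2 / q) / (2 / q - 1))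
    (hβ : ∀ ν : ℕ, 1 ≤ ν →
      β ν = ((2 / q) ^ (ν + 1) - 2 / q) / (2 / q - 1))
    (hε : ∀ ν : ℕ, ε ν = τ ν / (1 + τ ν)) :
    ∀ j ν : ℕ, j + 1 ≤ ν →
      (∏ i ∈ Finset.Ico j ν, ε i) = τ j / (1 + τ (ν - 1)) * (2 / q) ^ (ν - j - 1) :=
  moser_epsilon_product_general q τ₀ hq1 hq2 hτ₀ τ ε hτzero hτ hε
end

section
/- As ν → ∞, the products ∏_{i=0}^{ν−1} ε_i converge to (2 − q)·τ₀/((2 − q)·τ₀ + 2). -/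
open Filter Finset Topology

/-!
With `r = 2 / q > 1`, the closed form for `τ_ν` is also valid at `ν = 0` and is the solution of
the recursion `τ_{ν+1} = r (1 + τ_ν)`. Hence `ε_ν = r τ_ν / τ_{ν+1}`, the product telescopes to
`r^ν τ₀ / τ_ν = τ₀ / (τ₀ + r (1 - r^{-ν}) / (r - 1))`, and this tends to
`τ₀ / (τ₀ + r / (r - 1)) = (2 - q) τ₀ / ((2 - q) τ₀ + 2)`.
-/

theorem prod_range_div_one_add_of_succ_eq {K : Type*} [Field K] {r : K} {t : ℕ → K}
    (hr : r ≠ 0) (hrec : ∀ n, t (n + 1) = r * (1 + t n)) (ht : ∀ n, t n ≠ 0) (n : ℕ) :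
    ∏ i ∈ range n, t i / (1 + t i) = r ^ n * t 0 / t n := by
  induction n with
  | zero => simp [ht 0]
  | succ n ih =>
    have hone : 1 + t n = t (n + 1) / r := by rw [hrec, mul_div_cancel_left₀ _ hr]
    rw [prod_range_succ, ih, hone]
    field_simp [ht n, ht (n + 1)]
    ring

noncomputable def moserTau (r a : ℝ) (n : ℕ) : ℝ :=
  r ^ n * a + (r ^ (n + 1) - r) / (r - 1)

namespace moserTau

variable {r a : ℝ}

@[simp]
theorem zero : moserTau r a 0 = a := by
  simp [moserTau]

theorem succ (hr : r ≠ 1) (n : ℕ) : moserTau r a (n + 1) = r * (1 + moserTau r a n) := by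
  have : r - 1 ≠ 0 := sub_ne_zero.mpr hr
  simp only [moserTau]
  field_simp
  ring

theorem pos (hr : 1 < r) (ha : 0 < a) (n : ℕ) : 0 < moserTau r a n := by
  have hgeom : r ≤ r ^ (n + 1) := le_self_pow₀ hr.le n.succ_ne_zero
  have : 0 ≤ (r ^ (n + 1) - r) / (r - 1) := div_nonneg (by linarith) (by linarith)
  unfold moserTau
  positivity

theorem tendsto_pow_mul_div (hr : 1 < r) (ha : 0 ≤ a) :
    Tendsto (fun n => r ^ n * a / moserTau r a n) atTop (𝓝 (a / (a + r / (r - 1)))) := by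
  have hr0 : r ≠ 0 := by positivity
  have hr1 : r - 1 ≠ 0 := by linarith
  have hrewrite : ∀ n, r ^ n * a / moserTau r a n = a / (a + r * (1 - r⁻¹ ^ n) / (r - 1)) := by
    intro n
    have hpow : r ^ n ≠ 0 := pow_ne_zero n hr0
    simp only [moserTau, inv_pow]
    field_simp
    ring
  have hinv : Tendsto (fun n : ℕ => r⁻¹ ^ n) atTop (𝓝 0) :=
    tendsto_pow_atTop_nhds_zero_of_lt_one (by positivity) (inv_lt_one_of_one_lt₀ hr)
  have hlim : a + r / (r - 1) ≠ 0 := by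
    have : 0 < r / (r - 1) := div_pos (by linarith) (by linarith)
    positivity
  simp only [hrewrite]
  refine tendsto_const_nhds.div (tendsto_const_nhds.add ?_) hlim
  simpa using (((tendsto_const_nhds (x := (1 : ℝ))).sub hinv).const_mul r).div_const (r - 1)

end moserTau

theorem moser_epsilon_product_limit_general
    (q τ₀ : ℝ) (hq1 : 1 < q) (hq2 : q < 2) (hτ₀ : 0 < τ₀)
    (τ ε : ℕ → ℝ)
    (hτzero : τ 0 = τ₀)
    (hτ : ∀ ν : ℕ, 1 ≤ ν →
      τ ν = (2 / q) ^ ν * τ₀ + ((2 / q) ^ (ν + 1) - 2 / q) / (2 / q - 1))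
    (hε : ∀ ν : ℕ, ε ν = τ ν / (1 + τ ν)) :
    Tendsto (fun ν : ℕ => ∏ i ∈ Finset.range ν, ε i) atTop
      (nhds ((2 - q) * τ₀ / ((2 - q) * τ₀ + 2))) := by
  have hr : 1 < 2 / q := (one_lt_div (by linarith)).mpr hq2
  have hτ_eq : τ = moserTau (2 / q) τ₀ := by
    funext ν
    rcases Nat.eq_zero_or_pos ν with rfl | hν
    · rw [hτzero, moserTau.zero]
    · exact hτ ν hν
  have hprod : ∀ ν, ∏ i ∈ range ν, ε i = (2 / q) ^ ν * τ₀ / τ ν := by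
    intro ν
    simp only [hε, hτ_eq]
    rw [prod_range_div_one_add_of_succ_eq (by positivity) (moserTau.succ hr.ne')
      (fun n => (moserTau.pos hr hτ₀ n).ne') ν, moserTau.zero]
  simp only [hprod, hτ_eq]
  convert moserTau.tendsto_pow_mul_div hr hτ₀.le using 2
  have : 2 - q ≠ 0 := by linarith
  have : q ≠ 0 := by linarith
  field_simp

/-- Convergence of the products of the ε_i. -/
theorem moser_epsilon_product_limit
    (q τ₀ : ℝ) (hq1 : 1 < q) (hq2 : q < 2) (hτ₀ : 0 < τ₀)
    (τ β ε : ℕ → ℝ)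
    (hτzero : τ 0 = τ₀) (hβzero : β 0 = 0)
    (hτ : ∀ ν : ℕ, 1 ≤ ν →
      τ ν = (2 / q) ^ ν * τ₀ + ((2 / q) ^ (ν + 1) - 2 / q) / (2 / q - 1))
    (hβ : ∀ ν : ℕ, 1 ≤ ν →
      β ν = ((2 / q) ^ (ν + 1) - 2 / q) / (2 / q - 1))
    (hε : ∀ ν : ℕ, ε ν = τ ν / (1 + τ ν)) :
    Tendsto (fun ν : ℕ => ∏ i ∈ Finset.range ν, ε i) atTop
      (nhds ((2 - q) * τ₀ / ((2 - q) * τ₀ + 2))) :=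
  moser_epsilon_product_limit_general q τ₀ hq1 hq2 hτ₀ τ ε hτzero hτ hε
end

section
/- As ν → ∞, the sums Σ_{j=0}^{ν−1} (j/τ_j)·∏_{i=j}^{ν−1} ε_i converge to 2q/((2 − q)²·τ₀ + 2(2 − q)); in particular, the limit is at most 4/((2 − q)²·τ₀ + 2(2 − q)). -/
/-!
The sequence satisfies `τ (ν + 1) = r * (1 + τ ν)` with `r = 2 / q > 1`, so
`ε ν = τ ν / (1 + τ ν) = r * τ ν / τ (ν + 1)` and the product `∏_{i=j}^{ν-1} ε i` telescopes to
`r ^ (ν - j) * τ j / τ ν`. The weighted sum therefore factors as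
`(∑_{j<ν} j * (r⁻¹) ^ j) * (r ^ ν / τ ν)`. The first factor converges to `r⁻¹ / (1 - r⁻¹) ^ 2`,
and `τ ν / r ^ ν = τ 0 + ∑_{k<ν} (r⁻¹) ^ k` converges to `τ 0 + (1 - r⁻¹)⁻¹`.
-/

open Filter Finset Topology

namespace AffineRecurrence

variable {r : ℝ} {τ : ℕ → ℝ}

theorem succ_eq_of_closed_form (hr : r ≠ 1)
    (h : ∀ ν : ℕ, 1 ≤ ν → τ ν = r ^ ν * τ 0 + (r ^ (ν + 1) - r) / (r - 1)) (n : ℕ) :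
    τ (n + 1) = r * (1 + τ n) := by
  have hr' : r - 1 ≠ 0 := sub_ne_zero.mpr hr
  rcases Nat.eq_zero_or_pos n with rfl | hn
  · rw [h 1 le_rfl]
    field_simp
    ring
  · rw [h (n + 1) (by omega), h n hn]
    field_simp
    ring

theorem pos (hrec : ∀ n, τ (n + 1) = r * (1 + τ n)) (hr : 0 < r) (h0 : 0 < τ 0) (n : ℕ) :
    0 < τ n := by
  induction n with
  | zero => exact h0
  | succ n ih => rw [hrec n]; positivity

theorem prod_Ico_div_one_add (hrec : ∀ n, τ (n + 1) = r * (1 + τ n)) (hr : 0 < r)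
    (h0 : 0 < τ 0) {j ν : ℕ} (hjν : j ≤ ν) :
    ∏ i ∈ Ico j ν, τ i / (1 + τ i) = r ^ (ν - j) * τ j / τ ν := by
  have hτ := pos hrec hr h0
  induction ν, hjν using Nat.le_induction with
  | base => simp [(hτ j).ne']
  | succ n hn ih =>
    have h1 : 1 + τ n ≠ 0 := by linarith [hτ n]
    rw [prod_Ico_succ_top hn, ih, Nat.succ_sub hn, pow_succ, hrec n]
    field_simp [(hτ n).ne', hr.ne']

theorem weighted_sum_eq (hrec : ∀ n, τ (n + 1) = r * (1 + τ n)) (hr : 0 < r)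
    (h0 : 0 < τ 0) (ν : ℕ) :
    ∑ j ∈ range ν, (j / τ j) * ∏ i ∈ Ico j ν, τ i / (1 + τ i)
      = (∑ j ∈ range ν, j * r⁻¹ ^ j) * (r ^ ν / τ ν) := by
  rw [sum_mul]
  refine sum_congr rfl fun j hj => ?_
  have hjν : j ≤ ν := (mem_range.mp hj).le
  rw [prod_Ico_div_one_add hrec hr h0 hjν, pow_sub₀ r hr.ne' hjν, inv_pow]
  field_simp [(pos hrec hr h0 j).ne']

theorem div_pow_eq_add_sum (hrec : ∀ n, τ (n + 1) = r * (1 + τ n)) (hr : r ≠ 0) (ν : ℕ) :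
    τ ν / r ^ ν = τ 0 + ∑ k ∈ range ν, r⁻¹ ^ k := by
  induction ν with
  | zero => simp
  | succ n ih =>
    rw [sum_range_succ, ← add_assoc, ← ih, hrec n, pow_succ, inv_pow]
    field_simp
    ring

theorem tendsto_pow_div (hrec : ∀ n, τ (n + 1) = r * (1 + τ n)) (hr : 1 < r) (h0 : 0 < τ 0) :
    Tendsto (fun ν => r ^ ν / τ ν) atTop (𝓝 (τ 0 + (1 - r⁻¹)⁻¹)⁻¹) := by
  have hs : r⁻¹ < 1 := inv_lt_one_of_one_lt₀ hr
  have hgeom : Tendsto (fun ν => τ ν / r ^ ν) atTop (𝓝 (τ 0 + (1 - r⁻¹)⁻¹)) := by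
    simp_rw [div_pow_eq_add_sum hrec (by positivity : r ≠ 0)]
    exact ((hasSum_geometric_of_lt_one (by positivity) hs).tendsto_sum_nat).const_add _
  have hL : τ 0 + (1 - r⁻¹)⁻¹ ≠ 0 := by
    have : 0 < (1 - r⁻¹)⁻¹ := inv_pos.mpr (by linarith)
    positivity
  simpa only [inv_div] using hgeom.inv₀ hL

theorem tendsto_weighted_sum (hrec : ∀ n, τ (n + 1) = r * (1 + τ n)) (hr : 1 < r)
    (h0 : 0 < τ 0) :
    Tendsto (fun ν => ∑ j ∈ range ν, (j / τ j) * ∏ i ∈ Ico j ν, τ i / (1 + τ i)) atTop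
      (𝓝 (r⁻¹ / (1 - r⁻¹) ^ 2 * (τ 0 + (1 - r⁻¹)⁻¹)⁻¹)) := by
  have hr0 : 0 < r := by linarith
  have hs : ‖r⁻¹‖ < 1 := by
    rw [Real.norm_eq_abs, abs_of_pos (inv_pos.mpr hr0)]
    exact inv_lt_one_of_one_lt₀ hr
  simp_rw [weighted_sum_eq hrec hr0 h0]
  exact (hasSum_coe_mul_geometric_of_norm_lt_one hs).tendsto_sum_nat.mul
    (tendsto_pow_div hrec hr h0)

end AffineRecurrence

theorem moser_weighted_sum_limit'_general
    (q τ₀ : ℝ) (hq1 : 1 < q) (hq2 : q < 2) (hτ₀ : 0 < τ₀)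
    (τ ε : ℕ → ℝ)
    (hτzero : τ 0 = τ₀)
    (hτ : ∀ ν : ℕ, 1 ≤ ν →
      τ ν = (2 / q) ^ ν * τ₀ + ((2 / q) ^ (ν + 1) - 2 / q) / (2 / q - 1))
    (hε : ∀ ν : ℕ, ε ν = τ ν / (1 + τ ν)) :
    Tendsto
      (fun ν : ℕ => ∑ j ∈ Finset.range ν, ((j : ℝ) / τ j) * ∏ i ∈ Finset.Ico j ν, ε i)
      atTop (nhds (2 * q / ((2 - q) ^ 2 * τ₀ + 2 * (2 - q)))) ∧
    2 * q / ((2 - q) ^ 2 * τ₀ + 2 * (2 - q)) ≤ 4 / ((2 - q) ^ 2 * τ₀ + 2 * (2 - q)) := by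
  have hr : 1 < 2 / q := by rw [one_lt_div (by linarith)]; exact hq2
  subst hτzero
  have hrec := AffineRecurrence.succ_eq_of_closed_form hr.ne' hτ
  have hlim := AffineRecurrence.tendsto_weighted_sum hrec hr hτ₀
  have hden : 0 < (2 - q) ^ 2 * τ 0 + 2 * (2 - q) := by nlinarith
  have hval : (2 / q)⁻¹ / (1 - (2 / q)⁻¹) ^ 2 * (τ 0 + (1 - (2 / q)⁻¹)⁻¹)⁻¹
      = 2 * q / ((2 - q) ^ 2 * τ 0 + 2 * (2 - q)) := by
    have h2q : 2 - q ≠ 0 := by linarith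
    have hL : (2 - q) * τ 0 + 2 ≠ 0 := by nlinarith
    rw [inv_div, show 1 - q / 2 = (2 - q) / 2 by ring]
    field_simp
  simp_rw [hε]
  refine ⟨hval ▸ hlim, ?_⟩
  gcongr
  linarith

/-- Convergence of the weighted sums Σ_j (j/τ_j)·∏_{i=j}^{ν−1} ε_i, and a bound on the limit. -/
theorem moser_weighted_sum_limit'
    (q τ₀ : ℝ) (hq1 : 1 < q) (hq2 : q < 2) (hτ₀ : 0 < τ₀)
    (τ β ε : ℕ → ℝ)
    (hτzero : τ 0 = τ₀) (hβzero : β 0 = 0)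
    (hτ : ∀ ν : ℕ, 1 ≤ ν →
      τ ν = (2 / q) ^ ν * τ₀ + ((2 / q) ^ (ν + 1) - 2 / q) / (2 / q - 1))
    (hβ : ∀ ν : ℕ, 1 ≤ ν →
      β ν = ((2 / q) ^ (ν + 1) - 2 / q) / (2 / q - 1))
    (hε : ∀ ν : ℕ, ε ν = τ ν / (1 + τ ν)) :
    Tendsto
      (fun ν : ℕ => ∑ j ∈ Finset.range ν, ((j : ℝ) / τ j) * ∏ i ∈ Finset.Ico j ν, ε i)
      atTop (nhds (2 * q / ((2 - q) ^ 2 * τ₀ + 2 * (2 - q)))) ∧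
    2 * q / ((2 - q) ^ 2 * τ₀ + 2 * (2 - q)) ≤ 4 / ((2 - q) ^ 2 * τ₀ + 2 * (2 - q)) :=
  moser_weighted_sum_limit'_general q τ₀ hq1 hq2 hτ₀ τ ε hτzero hτ hε
end

section
/- Let A ≥ 0 be a real number and let (a_ν)_{ν≥0} be a sequence of nonnegative real numbers satisfying a_{ν+1}^{1+τ_ν} ≤ A·(1 + τ_ν)·a_ν^{τ_ν} for every ν ≥ 0. Then limsup_{ν→∞} a_ν ≤ (A·c_*)^α · (2/q)^{4/((2−q)²·τ₀ + 2(2−q))} · a_0^{1−α}, where c_* = τ₀ + 2/(2 − q) and α = 2/((2 − q)·τ₀ + 2). -/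
/-!
Put `r = 2/q > 1`. The exponents obey `τ_{ν+1} = r (1 + τ_ν)`, so
`1 + τ_ν = r^ν (τ₀ + t_ν)` with `t_ν = ∑_{k ≤ ν} r^{-k} → R = r/(r-1) = 2/(2-q)`;
note `c_* = τ₀ + R`.
If all `a_ν` are positive, `b_ν = log a_ν` satisfies the linear recursion
`(1 + τ_ν) b_{ν+1} ≤ log (A (1 + τ_ν)) + τ_ν b_ν`; divided by `r^ν` it telescopes to
`(τ₀ + t_ν) b_{ν+1} ≤ τ₀ b_0 + ∑_{k ≤ ν} r^{-k} log (A (1 + τ_k))`.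
Since `1 + τ_k ≤ c_* r^k`, the sum is at most `t_ν log (A c_*) + log r ∑_k k r^{-k}`,
and `∑_k k r^{-k} = r/(r-1)^2`. Letting `ν → ∞` and exponentiating gives the bound, with the
exponent `2q/((2-q)²τ₀ + 2(2-q))` on `2/q`, which is at most the stated one.
If some `a_N` vanishes, all later ones do, and the limsup is `0`.
-/

open Filter Finset Real Topology

theorem Filter.limsup_le_of_succ_le_of_tendsto {a f : ℕ → ℝ} {L : ℝ} (ha : ∀ n, 0 ≤ a n)
    (h : ∀ n, a (n + 1) ≤ f n) (hf : Tendsto f atTop (𝓝 L)) : limsup a atTop ≤ L := by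
  rw [← limsup_nat_add a 1, ← hf.limsup_eq]
  exact limsup_le_limsup (Eventually.of_forall h)
    (isCoboundedUnder_le_of_le atTop fun n => ha (n + 1)) hf.isBoundedUnder_le

namespace MoserIteration

variable {r τ₀ : ℝ} {τ : ℕ → ℝ}

theorem hasSum_inv_pow (hr : 1 < r) : HasSum (fun k : ℕ => r⁻¹ ^ k) (r / (r - 1)) := by
  convert hasSum_geometric_of_lt_one (by positivity) (inv_lt_one_of_one_lt₀ hr) using 1
  have : r - 1 ≠ 0 := by linarith
  field_simp

theorem hasSum_natCast_mul_inv_pow (hr : 1 < r) :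
    HasSum (fun k : ℕ => (k : ℝ) * r⁻¹ ^ k) (r / (r - 1) ^ 2) := by
  have hr' : ‖r⁻¹‖ < 1 := by
    rw [norm_inv, Real.norm_of_nonneg (by linarith)]
    exact inv_lt_one_of_one_lt₀ hr
  have : r - 1 ≠ 0 := by linarith
  rw [show r / (r - 1) ^ 2 = r⁻¹ / (1 - r⁻¹) ^ 2 by field_simp]
  exact hasSum_coe_mul_geometric_of_norm_lt_one hr'

theorem sum_inv_pow_mul_le (hr : 1 < r) {L : ℕ → ℝ} {L₁ L₂ : ℝ} (hL₂ : 0 ≤ L₂)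
    (hL : ∀ k, L k ≤ L₁ + k * L₂) (n : ℕ) :
    ∑ k ∈ range n, r⁻¹ ^ k * L k ≤ L₁ * ∑ k ∈ range n, r⁻¹ ^ k + L₂ * (r / (r - 1) ^ 2) := by
  have hweighted : ∑ k ∈ range n, (k : ℝ) * r⁻¹ ^ k ≤ r / (r - 1) ^ 2 :=
    sum_le_hasSum _ (fun k _ => by positivity) (hasSum_natCast_mul_inv_pow hr)
  calc ∑ k ∈ range n, r⁻¹ ^ k * L k ≤ ∑ k ∈ range n, r⁻¹ ^ k * (L₁ + k * L₂) :=
        sum_le_sum fun k _ => mul_le_mul_of_nonneg_left (hL k) (by positivity)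
    _ = L₁ * ∑ k ∈ range n, r⁻¹ ^ k + L₂ * ∑ k ∈ range n, (k : ℝ) * r⁻¹ ^ k := by
        rw [mul_sum, mul_sum, ← sum_add_distrib]
        exact sum_congr rfl fun k _ => by ring
    _ ≤ L₁ * ∑ k ∈ range n, r⁻¹ ^ k + L₂ * (r / (r - 1) ^ 2) := by gcongr

theorem exponent_succ_of_closed_form (hr : r ≠ 1) (hτ0 : τ 0 = τ₀)
    (hτ : ∀ ν : ℕ, 1 ≤ ν → τ ν = r ^ ν * τ₀ + (r ^ (ν + 1) - r) / (r - 1)) (ν : ℕ) :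
    τ (ν + 1) = r * (1 + τ ν) := by
  have : r - 1 ≠ 0 := sub_ne_zero.2 hr
  rcases ν with _ | ν
  · rw [hτ 1 le_rfl, hτ0]
    field_simp
    ring
  · rw [hτ _ (by omega), hτ _ (by omega)]
    field_simp
    ring

theorem exponent_pos (hr : 0 < r) (hτ₀ : 0 < τ₀) (hτ0 : τ 0 = τ₀)
    (hτs : ∀ ν, τ (ν + 1) = r * (1 + τ ν)) (ν : ℕ) : 0 < τ ν := by
  induction ν with
  | zero => exact hτ0 ▸ hτ₀
  | succ n ih => rw [hτs]; positivity

theorem one_add_exponent_eq (hr : r ≠ 0) (hτ0 : τ 0 = τ₀)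
    (hτs : ∀ ν, τ (ν + 1) = r * (1 + τ ν)) (ν : ℕ) :
    1 + τ ν = r ^ ν * (τ₀ + ∑ k ∈ range (ν + 1), r⁻¹ ^ k) := by
  induction ν with
  | zero => simp [hτ0, add_comm]
  | succ n ih =>
    have hcancel : r ^ (n + 1) * r⁻¹ ^ (n + 1) = 1 := by rw [← mul_pow, mul_inv_cancel₀ hr, one_pow]
    rw [hτs, ih, sum_range_succ _ (n + 1)]
    linear_combination (-1 : ℝ) * hcancel

theorem one_add_exponent_le (hr : 1 < r) (hτ0 : τ 0 = τ₀)
    (hτs : ∀ ν, τ (ν + 1) = r * (1 + τ ν)) (ν : ℕ) :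
    1 + τ ν ≤ r ^ ν * (τ₀ + r / (r - 1)) := by
  rw [one_add_exponent_eq (by positivity) hτ0 hτs]
  gcongr
  exact sum_le_hasSum _ (fun k _ => by positivity) (hasSum_inv_pow hr)

theorem mul_succ_le_of_linear_recursion (hr : 0 < r) (hτ0 : τ 0 = τ₀)
    (hτs : ∀ ν, τ (ν + 1) = r * (1 + τ ν)) {b L : ℕ → ℝ}
    (h : ∀ ν, (1 + τ ν) * b (ν + 1) ≤ L ν + τ ν * b ν) (ν : ℕ) :
    (τ₀ + ∑ k ∈ range (ν + 1), r⁻¹ ^ k) * b (ν + 1) ≤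
      ∑ k ∈ range (ν + 1), r⁻¹ ^ k * L k + τ₀ * b 0 := by
  induction ν with
  | zero => simpa [hτ0, add_comm] using h 0
  | succ n ih =>
    have hstep := h (n + 1)
    rw [one_add_exponent_eq hr.ne' hτ0 hτs (n + 1), hτs n,
      one_add_exponent_eq hr.ne' hτ0 hτs n] at hstep
    refine le_of_mul_le_mul_left ?_ (pow_pos hr (n + 1))
    calc r ^ (n + 1) * ((τ₀ + ∑ k ∈ range (n + 1 + 1), r⁻¹ ^ k) * b (n + 1 + 1))
        ≤ L (n + 1) + r ^ (n + 1) * ((τ₀ + ∑ k ∈ range (n + 1), r⁻¹ ^ k) * b (n + 1)) := by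
          linear_combination hstep
      _ ≤ L (n + 1) + r ^ (n + 1) * (∑ k ∈ range (n + 1), r⁻¹ ^ k * L k + τ₀ * b 0) := by
          gcongr
      _ = r ^ (n + 1) * (∑ k ∈ range (n + 1 + 1), r⁻¹ ^ k * L k + τ₀ * b 0) := by
          have hcancel : r ^ (n + 1) * r⁻¹ ^ (n + 1) = 1 := by
            rw [← mul_pow, mul_inv_cancel₀ hr.ne', one_pow]
          rw [sum_range_succ _ (n + 1)]
          linear_combination (-L (n + 1)) * hcancel

theorem eq_zero_of_eq_zero_of_le (hτ : ∀ ν, 0 < τ ν) {A : ℝ} {a : ℕ → ℝ} (ha : ∀ ν, 0 ≤ a ν)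
    (hrec : ∀ ν, a (ν + 1) ^ (1 + τ ν) ≤ A * (1 + τ ν) * a ν ^ τ ν) {N n : ℕ} (hN : a N = 0)
    (hn : N ≤ n) : a n = 0 := by
  induction n, hn using Nat.le_induction with
  | base => exact hN
  | succ n _ ih =>
    have h := hrec n
    rw [ih, zero_rpow (hτ n).ne', mul_zero] at h
    exact ((rpow_eq_zero_iff_of_nonneg (ha _)).1 (h.antisymm (rpow_nonneg (ha _) _))).1

theorem limsup_le_of_pos (hr : 1 < r) (hτ₀ : 0 < τ₀) (hτ0 : τ 0 = τ₀)
    (hτs : ∀ ν, τ (ν + 1) = r * (1 + τ ν)) {A : ℝ} (hA : 0 < A) {a : ℕ → ℝ} (ha : ∀ ν, 0 < a ν)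
    (hrec : ∀ ν, a (ν + 1) ^ (1 + τ ν) ≤ A * (1 + τ ν) * a ν ^ τ ν) :
    limsup a atTop ≤ (A * (τ₀ + r / (r - 1))) ^ (r / (r - 1) / (τ₀ + r / (r - 1))) *
      r ^ (r / (r - 1) ^ 2 / (τ₀ + r / (r - 1))) * a 0 ^ (τ₀ / (τ₀ + r / (r - 1))) := by
  set R := r / (r - 1)
  set R' := r / (r - 1) ^ 2
  set t : ℕ → ℝ := fun ν => ∑ k ∈ range (ν + 1), r⁻¹ ^ k
  have hRpos : 0 < R := div_pos (by linarith) (by linarith)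
  have hτ := exponent_pos (by linarith) hτ₀ hτ0 hτs
  have ht : Tendsto t atTop (𝓝 R) :=
    (hasSum_inv_pow hr).tendsto_sum_nat.comp (tendsto_add_atTop_nat 1)
  have hlog (ν : ℕ) : (1 + τ ν) * log (a (ν + 1)) ≤ log (A * (1 + τ ν)) + τ ν * log (a ν) := by
    have hP : 0 < 1 + τ ν := by linarith [hτ ν]
    have h := log_le_log (rpow_pos_of_pos (ha _) _) (hrec ν)
    rwa [log_rpow (ha _), log_mul (by positivity) (rpow_pos_of_pos (ha _) _).ne',
      log_rpow (ha _)] at h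
  have hlogP (k : ℕ) : log (A * (1 + τ k)) ≤ log (A * (τ₀ + R)) + k * log r := by
    have hP : 0 < 1 + τ k := by linarith [hτ k]
    calc log (A * (1 + τ k)) ≤ log (A * (τ₀ + R) * r ^ k) := by
          refine log_le_log (by positivity) ?_
          rw [mul_assoc, mul_comm (τ₀ + R)]
          exact mul_le_mul_of_nonneg_left (one_add_exponent_le hr hτ0 hτs k) hA.le
      _ = log (A * (τ₀ + R)) + k * log r := by
          rw [log_mul (by positivity) (by positivity), log_pow]
  have hb (ν : ℕ) : log (a (ν + 1)) ≤
      (log (A * (τ₀ + R)) * t ν + log r * R' + τ₀ * log (a 0)) / (τ₀ + t ν) := by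
    have htpos : 0 < τ₀ + t ν := by positivity
    have htelescope := mul_succ_le_of_linear_recursion (b := fun ν => log (a ν))
      (by linarith) hτ0 hτs hlog ν
    have hsum := sum_inv_pow_mul_le hr (log_nonneg hr.le) hlogP (ν + 1)
    rw [le_div_iff₀ htpos]
    linarith
  calc limsup a atTop
      ≤ exp ((log (A * (τ₀ + R)) * R + log r * R' + τ₀ * log (a 0)) / (τ₀ + R)) := by
        refine limsup_le_of_succ_le_of_tendsto (fun n => (ha n).le)
          (fun ν => (log_le_iff_le_exp (ha _)).1 (hb ν)) ?_
        exact ((((ht.const_mul _).add_const _).add_const _).div (ht.const_add τ₀)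
          (by positivity)).rexp
    _ = _ := by
        rw [rpow_def_of_pos (by positivity), rpow_def_of_pos (by linarith),
          rpow_def_of_pos (ha 0), ← exp_add, ← exp_add]
        congr 1
        field_simp

theorem limsup_le (hr : 1 < r) (hτ₀ : 0 < τ₀) (hτ0 : τ 0 = τ₀)
    (hτs : ∀ ν, τ (ν + 1) = r * (1 + τ ν)) {A : ℝ} (hA : 0 ≤ A) {a : ℕ → ℝ} (ha : ∀ ν, 0 ≤ a ν)
    (hrec : ∀ ν, a (ν + 1) ^ (1 + τ ν) ≤ A * (1 + τ ν) * a ν ^ τ ν) :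
    limsup a atTop ≤ (A * (τ₀ + r / (r - 1))) ^ (r / (r - 1) / (τ₀ + r / (r - 1))) *
      r ^ (r / (r - 1) ^ 2 / (τ₀ + r / (r - 1))) * a 0 ^ (τ₀ / (τ₀ + r / (r - 1))) := by
  by_cases hpos : ∀ ν, 0 < a ν
  · refine limsup_le_of_pos hr hτ₀ hτ0 hτs (hA.lt_of_ne' ?_) hpos hrec
    rintro rfl
    have h := hrec 0
    rw [zero_mul, zero_mul] at h
    exact (rpow_pos_of_pos (hpos 1) _).not_ge h
  · obtain ⟨N, hN⟩ := not_forall.1 hpos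
    have hτ := exponent_pos (by linarith) hτ₀ hτ0 hτs
    have hzero : ∀ᶠ n in atTop, a n = 0 := eventually_atTop.2
      ⟨N, fun n => eq_zero_of_eq_zero_of_le hτ ha hrec ((not_lt.1 hN).antisymm (ha N))⟩
    rw [limsup_congr hzero, limsup_const]
    have hR : 0 < r / (r - 1) := div_pos (by linarith) (by linarith)
    exact mul_nonneg (mul_nonneg (rpow_nonneg (by positivity) _) (rpow_nonneg (by linarith) _))
      (rpow_nonneg (ha 0) _)

end MoserIteration

open MoserIteration in
theorem moser_iteration_limsup_general
    (q τ₀ : ℝ) (hq1 : 1 < q) (hq2 : q < 2) (hτ₀ : 0 < τ₀)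
    (τ : ℕ → ℝ)
    (hτzero : τ 0 = τ₀)
    (hτ : ∀ ν : ℕ, 1 ≤ ν →
      τ ν = (2 / q) ^ ν * τ₀ + ((2 / q) ^ (ν + 1) - 2 / q) / (2 / q - 1))
    (A : ℝ) (hA : 0 ≤ A) (a : ℕ → ℝ) (ha : ∀ ν : ℕ, 0 ≤ a ν)
    (hrec : ∀ ν : ℕ, a (ν + 1) ^ (1 + τ ν) ≤ A * (1 + τ ν) * a ν ^ (τ ν)) :
    limsup a atTop ≤
      (A * (τ₀ + 2 / (2 - q))) ^ (2 / ((2 - q) * τ₀ + 2)) *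
        (2 / q) ^ ((4 : ℝ) / ((2 - q) ^ 2 * τ₀ + 2 * (2 - q))) *
        a 0 ^ (1 - 2 / ((2 - q) * τ₀ + 2)) := by
  have hq0 : 0 < q := by linarith
  have h2q : 0 < 2 - q := by linarith
  have hr : 1 < 2 / q := (one_lt_div hq0).2 hq2
  have hR : 2 / q / (2 / q - 1) = 2 / (2 - q) := by field_simp
  have hR' : 2 / q / (2 / q - 1) ^ 2 / (τ₀ + 2 / (2 - q)) =
      2 * q / ((2 - q) ^ 2 * τ₀ + 2 * (2 - q)) := by field_simp
  have hα : 2 / (2 - q) / (τ₀ + 2 / (2 - q)) = 2 / ((2 - q) * τ₀ + 2) := by field_simp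
  have hβ : τ₀ / (τ₀ + 2 / (2 - q)) = 1 - 2 / ((2 - q) * τ₀ + 2) := by field_simp; ring
  have key := limsup_le hr hτ₀ hτzero (exponent_succ_of_closed_form hr.ne' hτzero hτ) hA ha hrec
  rw [hR, hR', hα, hβ] at key
  refine key.trans ?_
  gcongr
  · exact rpow_nonneg (ha 0) _
  · exact hr.le
  · linarith

/-- The abstract Moser-type iteration at the core of Lemma 3.6. -/
theorem moser_iteration_limsup
    (q τ₀ : ℝ) (hq1 : 1 < q) (hq2 : q < 2) (hτ₀ : 0 < τ₀)
    (τ β ε : ℕ → ℝ)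
    (hτzero : τ 0 = τ₀) (hβzero : β 0 = 0)
    (hτ : ∀ ν : ℕ, 1 ≤ ν →
      τ ν = (2 / q) ^ ν * τ₀ + ((2 / q) ^ (ν + 1) - 2 / q) / (2 / q - 1))
    (hβ : ∀ ν : ℕ, 1 ≤ ν →
      β ν = ((2 / q) ^ (ν + 1) - 2 / q) / (2 / q - 1))
    (hε : ∀ ν : ℕ, ε ν = τ ν / (1 + τ ν))
    (A : ℝ) (hA : 0 ≤ A) (a : ℕ → ℝ) (ha : ∀ ν : ℕ, 0 ≤ a ν)
    (hrec : ∀ ν : ℕ, a (ν + 1) ^ (1 + τ ν) ≤ A * (1 + τ ν) * a ν ^ (τ ν)) :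
    limsup a atTop ≤
      (A * (τ₀ + 2 / (2 - q))) ^ (2 / ((2 - q) * τ₀ + 2)) *
        (2 / q) ^ ((4 : ℝ) / ((2 - q) ^ 2 * τ₀ + 2 * (2 - q))) *
        a 0 ^ (1 - 2 / ((2 - q) * τ₀ + 2)) :=
  moser_iteration_limsup_general q τ₀ hq1 hq2 hτ₀ τ hτzero hτ A hA a ha hrec
end

section
/- Let (X, μ) be a measure space, let u : X → ℝ be measurable with ‖u‖_{L²(μ)} < ∞, and let c₀ > 0 and B ≥ 0 be real constants. Assume that for every integer τ ≥ 1 one has ‖u‖_{L^{2(1+τ)}(μ)}^{1+τ} ≤ c₀·(1 + τ)·B·‖u‖_{L^{2τ}(μ)}^{τ} (equivalently, ‖|u|^{1+τ}‖_{L²} ≤ c₀(1+τ)B·‖|u|^{τ}‖_{L²}). Then for every real p with 2 < p < ∞ there is a constant c, depending only on c₀ and p (one may take c = max(1, c₀)·(⌈p/2⌉!)^{1/⌈p/2⌉}), such that ‖u‖_{L^p(μ)} ≤ c·‖u‖_{L²(μ)}^{2/p}·B^{1−2/p}. -/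
/-!
Iterating the hypothesis from `τ = 1` gives `‖u‖_{2k}^k ≤ (c₀ B)^{k-1} k! ‖u‖₂` for every `k ≥ 1`.
For `k = ⌈p/2⌉` we have `2 < p ≤ 2k`, and Hölder's inequality (log-convexity of `r ↦ ‖u‖_r`)
interpolates `‖u‖_p` between `‖u‖₂` and `‖u‖_{2k}`; the exponents then combine to `2/p` on
`‖u‖₂` and `1 - 2/p` on `c₀ B`, while `k!` appears with an exponent at most `1/k`.
-/

open MeasureTheory
open scoped ENNReal

namespace ENNReal

theorem rpow_le_max_one (x : ℝ≥0∞) {t : ℝ} (ht₀ : 0 ≤ t) (ht₁ : t ≤ 1) : x ^ t ≤ max 1 x := by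
  rcases le_total x 1 with hx | hx
  · exact (rpow_le_one hx ht₀).trans (le_max_left _ _)
  · calc x ^ t ≤ x ^ (1 : ℝ) := rpow_le_rpow_of_exponent_le hx ht₁
      _ = x := rpow_one x
      _ ≤ max 1 x := le_max_right _ _

theorem le_pow_mul_factorial_mul_of_le_mul_succ {f : ℕ → ℝ≥0∞} {C : ℝ≥0∞}
    (hf : ∀ m, 1 ≤ m → f (m + 1) ≤ C * (m + 1 : ℕ) * f m) :
    ∀ m, 1 ≤ m → f m ≤ C ^ (m - 1) * m.factorial * f 1 := by
  intro m hm
  induction m, hm using Nat.le_induction with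
  | base => simp
  | succ m hm ih =>
    calc f (m + 1) ≤ C * (m + 1 : ℕ) * (C ^ (m - 1) * m.factorial * f 1) :=
          (hf m hm).trans (by gcongr)
      _ = C ^ (m + 1 - 1) * (m + 1).factorial * f 1 := by
          obtain ⟨j, rfl⟩ := Nat.exists_eq_add_of_le' hm
          simp only [Nat.add_sub_cancel, Nat.factorial_succ, pow_succ]
          push_cast
          ring

end ENNReal

namespace MeasureTheory

variable {α ε : Type*} [MeasurableSpace α] {μ : Measure α} [TopologicalSpace ε] [ContinuousENorm ε]

theorem eLpNorm'_le_eLpNorm'_rpow_mul_eLpNorm'_rpow {f : α → ε} (hf : AEStronglyMeasurable f μ)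
    {p p₀ p₁ θ : ℝ} (hp : 0 < p) (hp₀ : 0 < p₀) (hp₁ : 0 < p₁) (hθ₀ : 0 ≤ θ) (hθ₁ : θ ≤ 1)
    (hpθ : 1 / p = θ / p₀ + (1 - θ) / p₁) :
    eLpNorm' f p μ ≤ eLpNorm' f p₀ μ ^ θ * eLpNorm' f p₁ μ ^ (1 - θ) := by
  set a := θ * p / p₀
  set b := (1 - θ) * p / p₁
  have hab : a + b = 1 := by
    have := congrArg (· * p) hpθ
    simp only [a, b]
    field_simp at this ⊢
    linarith
  have ha : 0 ≤ a := by positivity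
  have hb : 0 ≤ b := div_nonneg (mul_nonneg (sub_nonneg.2 hθ₁) hp.le) hp₁.le
  have hpoint : ∀ x, ‖f x‖ₑ ^ p = (‖f x‖ₑ ^ p₀) ^ a * (‖f x‖ₑ ^ p₁) ^ b := by
    intro x
    rw [← ENNReal.rpow_mul, ← ENNReal.rpow_mul,
      ← ENNReal.rpow_add_of_nonneg _ _ (by positivity) (by positivity)]
    congr 1
    simp only [a, b]
    field_simp
    ring
  have hholder : ∫⁻ x, ‖f x‖ₑ ^ p ∂μ ≤
      (∫⁻ x, ‖f x‖ₑ ^ p₀ ∂μ) ^ a * (∫⁻ x, ‖f x‖ₑ ^ p₁ ∂μ) ^ b := by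
    simp_rw [hpoint]
    exact ENNReal.lintegral_mul_norm_pow_le (hf.enorm.pow_const p₀) (hf.enorm.pow_const p₁)
      ha hb hab
  calc eLpNorm' f p μ ≤ ((∫⁻ x, ‖f x‖ₑ ^ p₀ ∂μ) ^ a * (∫⁻ x, ‖f x‖ₑ ^ p₁ ∂μ) ^ b) ^ (1 / p) :=
        ENNReal.rpow_le_rpow hholder (by positivity)
    _ = eLpNorm' f p₀ μ ^ θ * eLpNorm' f p₁ μ ^ (1 - θ) := by
        rw [eLpNorm', eLpNorm', ENNReal.mul_rpow_of_nonneg _ _ (by positivity),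
          ← ENNReal.rpow_mul, ← ENNReal.rpow_mul, ← ENNReal.rpow_mul, ← ENNReal.rpow_mul]
        congr 2 <;> simp only [a, b] <;> field_simp

theorem eLpNorm_le_of_eLpNorm_two_mul_pow_le {u : α → ε} (hu : AEStronglyMeasurable u μ)
    {k : ℕ} (hk : 2 ≤ k) {p : ℝ} (hp : 2 ≤ p) (hpk : p ≤ 2 * k) {C : ℝ≥0∞}
    (hC : eLpNorm u (2 * k) μ ^ k ≤ C ^ (k - 1) * k.factorial * eLpNorm u 2 μ) :
    eLpNorm u (ENNReal.ofReal p) μ ≤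
      C ^ (1 - 2 / p) * (k.factorial : ℝ≥0∞) ^ (1 / (k : ℝ)) * eLpNorm u 2 μ ^ (2 / p) := by
  have hk' : (2 : ℝ) ≤ k := by exact_mod_cast hk
  have hp₀ : 0 < p := by linarith
  set e := (1 - 2 / p) / (k - 1)
  have hk₁ : (k : ℝ) - 1 ≠ 0 := by linarith
  have he : 0 ≤ e := div_nonneg (by rw [sub_nonneg, div_le_one hp₀]; exact hp) (by linarith)
  have hke : k * e ≤ 1 := by
    rw [show k * e = k * (p - 2) / (p * (k - 1)) by simp only [e]; field_simp,
      div_le_one (by nlinarith)]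
    nlinarith
  have hinterp : eLpNorm u (ENNReal.ofReal p) μ ≤
      eLpNorm u 2 μ ^ (1 - k * e) * eLpNorm u (2 * k) μ ^ (k * e) := by
    have h := eLpNorm'_le_eLpNorm'_rpow_mul_eLpNorm'_rpow hu (p₀ := 2) (p₁ := 2 * k)
      hp₀ two_pos (by positivity) (sub_nonneg.2 hke) (sub_le_self _ (by positivity))
      (by simp only [e]; field_simp; ring)
    rw [sub_sub_cancel] at h
    rw [eLpNorm_eq_eLpNorm' (by simpa using hp₀) ENNReal.ofReal_ne_top,
      eLpNorm_eq_eLpNorm' two_ne_zero ENNReal.ofNat_ne_top,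
      eLpNorm_eq_eLpNorm' (by simp; omega) (by simp [ENNReal.mul_eq_top])]
    simpa [ENNReal.toReal_ofReal hp₀.le] using h
  have hk₁e : ((k : ℝ) - 1) * e = 1 - 2 / p := by
    simp only [e]
    field_simp
  have hfact : (k.factorial : ℝ≥0∞) ^ e ≤ (k.factorial : ℝ≥0∞) ^ (1 / (k : ℝ)) :=
    ENNReal.rpow_le_rpow_of_exponent_le (by exact_mod_cast k.factorial_pos)
      (by rw [le_div_iff₀ (by positivity)]; linarith)
  calc eLpNorm u (ENNReal.ofReal p) μ
      ≤ eLpNorm u 2 μ ^ (1 - k * e) * (C ^ (k - 1) * k.factorial * eLpNorm u 2 μ) ^ e := by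
        refine hinterp.trans ?_
        rw [ENNReal.rpow_mul, ENNReal.rpow_natCast]
        gcongr
    _ = C ^ (((k : ℝ) - 1) * e) * (k.factorial : ℝ≥0∞) ^ e *
          eLpNorm u 2 μ ^ (1 - k * e + e) := by
        rw [ENNReal.mul_rpow_of_nonneg _ _ he, ENNReal.mul_rpow_of_nonneg _ _ he,
          ENNReal.rpow_mul, ← Nat.cast_pred (by omega), ENNReal.rpow_natCast,
          ENNReal.rpow_add_of_nonneg _ _ (sub_nonneg.2 hke) he]
        ring
    _ ≤ C ^ (1 - 2 / p) * (k.factorial : ℝ≥0∞) ^ (1 / (k : ℝ)) * eLpNorm u 2 μ ^ (2 / p) := by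
        rw [hk₁e, show 1 - k * e + e = 2 / p by linarith]
        gcongr

end MeasureTheory

theorem lp_bound_of_iteration_general
    {X : Type*} [MeasurableSpace X] (μ : Measure X)
    (u : X → ℝ) (hu : Measurable u)
    (c₀ B : ℝ) (hc₀ : 0 < c₀)
    (hiter : ∀ τ : ℕ, 1 ≤ τ →
      eLpNorm u (2 * (1 + (τ : ℝ≥0∞))) μ ^ (1 + τ) ≤
        ENNReal.ofReal (c₀ * (1 + (τ : ℝ)) * B) * eLpNorm u (2 * (τ : ℝ≥0∞)) μ ^ τ) :
    ∀ p : ℝ, 2 < p →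
      eLpNorm u (ENNReal.ofReal p) μ ≤
        ENNReal.ofReal (max 1 c₀ *
            ((Nat.ceil (p / 2)).factorial : ℝ) ^ ((1 : ℝ) / (Nat.ceil (p / 2) : ℝ))) *
          eLpNorm u 2 μ ^ ((2 : ℝ) / p) * ENNReal.ofReal B ^ (1 - 2 / p) := by
  intro p hp
  set k := ⌈p / 2⌉₊
  have hk : 2 ≤ k := Nat.lt_ceil.mpr (by push_cast; linarith)
  have hpk : p ≤ 2 * k := by linarith [Nat.le_ceil (p / 2)]
  set C := ENNReal.ofReal c₀ * ENNReal.ofReal B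
  have hrec : ∀ m, 1 ≤ m →
      eLpNorm u (2 * (m + 1 : ℕ)) μ ^ (m + 1) ≤ C * (m + 1 : ℕ) * eLpNorm u (2 * m) μ ^ m := by
    intro m hm
    convert hiter m hm using 2
    · push_cast; ring_nf
    · ring
    · rw [ENNReal.ofReal_mul (by positivity), ENNReal.ofReal_mul hc₀.le, add_comm]
      norm_cast
      ring
  have hN := ENNReal.le_pow_mul_factorial_mul_of_le_mul_succ
    (f := fun m => eLpNorm u (2 * m) μ ^ m) hrec k (by omega)
  simp only [Nat.cast_one, mul_one, pow_one] at hN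
  have hp₀ : 0 < p := by linarith
  have hs : 0 ≤ 1 - 2 / p := by rw [sub_nonneg, div_le_one hp₀]; exact hp.le
  calc eLpNorm u (ENNReal.ofReal p) μ
      ≤ C ^ (1 - 2 / p) * (k.factorial : ℝ≥0∞) ^ (1 / (k : ℝ)) * eLpNorm u 2 μ ^ (2 / p) :=
        eLpNorm_le_of_eLpNorm_two_mul_pow_le hu.aestronglyMeasurable hk hp.le hpk hN
    _ = ENNReal.ofReal c₀ ^ (1 - 2 / p) * (k.factorial : ℝ≥0∞) ^ (1 / (k : ℝ)) *
          eLpNorm u 2 μ ^ (2 / p) * ENNReal.ofReal B ^ (1 - 2 / p) := by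
        rw [ENNReal.mul_rpow_of_nonneg _ _ hs]
        ring
    _ ≤ _ := by
        rw [ENNReal.ofReal_mul (by positivity), ← ENNReal.ofReal_rpow_of_pos (by positivity),
          ENNReal.ofReal_natCast, ENNReal.ofReal_max, ENNReal.ofReal_one]
        gcongr
        exact ENNReal.rpow_le_max_one _ hs (sub_le_self _ (by positivity))

/-- Abstract iteration behind Lemma 3.7: an L²-to-Lᵖ bound from the
Michael–Simon-type recursive inequality. -/
theorem lp_bound_of_iteration
    {X : Type*} [MeasurableSpace X] (μ : Measure X)
    (u : X → ℝ) (hu : Measurable u) (h2 : eLpNorm u 2 μ < ⊤)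
    (c₀ B : ℝ) (hc₀ : 0 < c₀) (hB : 0 ≤ B)
    (hiter : ∀ τ : ℕ, 1 ≤ τ →
      eLpNorm u (2 * (1 + (τ : ℝ≥0∞))) μ ^ (1 + τ) ≤
        ENNReal.ofReal (c₀ * (1 + (τ : ℝ)) * B) * eLpNorm u (2 * (τ : ℝ≥0∞)) μ ^ τ) :
    ∀ p : ℝ, 2 < p →
      eLpNorm u (ENNReal.ofReal p) μ ≤
        ENNReal.ofReal (max 1 c₀ *
            ((Nat.ceil (p / 2)).factorial : ℝ) ^ ((1 : ℝ) / (Nat.ceil (p / 2) : ℝ))) *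
          eLpNorm u 2 μ ^ ((2 : ℝ) / p) * ENNReal.ofReal B ^ (1 - 2 / p) :=
  lp_bound_of_iteration_general μ u hu c₀ B hc₀ hiter
end
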